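/- arXiv:0804.2138 — 4 statements merged into one kernel-verified Lean document; each statement's English description precedes it below -/
import Mathlib

section
/- Let C ⊂ S be a cluster. Then there exist constants K > δ > 0 and a set Ẑ ⊂ ∩_{i∈C} G_i with λ(Ẑ) > 0 such that for every z ∈ Ẑ: (i) δ < f_i(z) < K for all i ∈ C, and (ii) f_j(z) = 0 for all j ∉ C. -/
open Finset MeasureTheory

namespace ViterbiHMM

/-- The state space `S = {1,…,K'}` with `K' = K+2 > 1` states. -/
abbrev S (K : ℕ) := Fin (K + 2)

/-- The observation space `X = ℝ^D`. -/
abbrev Obs (D : ℕ) := Fin D → ℝ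

variable {K D : ℕ}

/-- Maximum over all states. -/
noncomputable def smax (g : S K → ℝ) : ℝ :=
  Finset.univ.sup' Finset.univ_nonempty g

/-- `p*_l = max_{j ∈ S} p_{j l}`. -/
noncomputable def pstar (p : S K → S K → ℝ) (l : S K) : ℝ :=
  smax fun j => p j l

/-- The likelihood `Λ(q_{1:n}; x_{1:n})` of the path `q` (at times `1,…,n`),
with initial distribution `ppi`, transition matrix `p`, emission densities `f`
and observations `x` (1-based). -/
noncomputable def lik (ppi : S K → ℝ) (p : S K → S K → ℝ) (f : S K → Obs D → ℝ)
    (x : ℕ → Obs D) (n : ℕ) (q : ℕ → S K) : ℝ :=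
  ppi (q 1) * f (q 1) (x 1) *
    ∏ i ∈ Finset.Icc 2 n, (p (q (i - 1)) (q i) * f (q i) (x i))

/-- The scores `δ_u(l)`, via the Viterbi recursion. -/
noncomputable def score (ppi : S K → ℝ) (p : S K → S K → ℝ) (f : S K → Obs D → ℝ)
    (x : ℕ → Obs D) : ℕ → S K → ℝ
  | 0, l => ppi l
  | 1, l => ppi l * f l (x 1)
  | (u + 2), l => smax (fun i => score ppi p f x (u + 1) i * p i l) * f l (x (u + 2))

/-- `p^{(r)}_{ij}(u)`, the maximal partial likelihood of paths from `i` (at time `u`)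
to `j` (at time `u+r+1`). -/
noncomputable def plik (p : S K → S K → ℝ) (f : S K → Obs D → ℝ) (x : ℕ → Obs D) :
    ℕ → ℕ → S K → S K → ℝ
  | _, 0, i, j => p i j
  | u, (r + 1), i, j => smax fun c => plik p f x u r i c * f c (x (u + r + 1)) * p c j

/-- Given `x_{1:u+r}`, the observation `x_u` is an `l`-node of order `r`. -/
def IsNode (ppi : S K → ℝ) (p : S K → S K → ℝ) (f : S K → Obs D → ℝ)
    (x : ℕ → Obs D) (u r : ℕ) (l : S K) : Prop :=
  ∀ i j : S K, score ppi p f x u i * plik p f x u r i j ≤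
    score ppi p f x u l * plik p f x u r l j

/-- A block `b_{1:k}` is an `l`-barrier of order `r` and length `k`: however it is
prefixed, the observation at position `w + k - r` of the concatenation is an `l`-node
of order `r`. -/
def IsBarrier (ppi : S K → ℝ) (p : S K → S K → ℝ) (f : S K → Obs D → ℝ)
    (b : ℕ → Obs D) (k r : ℕ) (l : S K) : Prop :=
  ∀ w : ℕ, 1 ≤ w → ∀ x' : ℕ → Obs D,
    IsNode ppi p f (fun i => if i ≤ w then x' i else b (i - w)) (w + k - r) r l

/-- The set `V(x_{1:n})` of Viterbi alignments (maximizers of the likelihood);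
a path is a function `ℕ → S` used at times `1,…,n`. -/
def Vset (ppi : S K → ℝ) (p : S K → S K → ℝ) (f : S K → Obs D → ℝ)
    (x : ℕ → Obs D) (n : ℕ) : Set (ℕ → S K) :=
  {v | ∀ w : ℕ → S K, lik ppi p f x n w ≤ lik ppi p f x n v}

/-- The set `W^l(x_{1:n})` of maximizers of the likelihood among paths ending in `l`. -/
def Wset (ppi : S K → ℝ) (p : S K → S K → ℝ) (f : S K → Obs D → ℝ)
    (x : ℕ → Obs D) (n : ℕ) (l : S K) : Set (ℕ → S K) :=
  {v | v n = l ∧ ∀ w : ℕ → S K, w n = l → lik ppi p f x n w ≤ lik ppi p f x n v}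

/-- The support `G_i = {x : f_i(x) > 0}`. -/
def G (f : S K → Obs D → ℝ) (i : S K) : Set (Obs D) := {x | 0 < f i x}

/-- `C` is a cluster: the intersection of the supports of the emission densities over `C`
has positive probability under every `P_j`, `j ∈ C`, and zero probability under every
`P_j`, `j ∉ C`. -/
def IsCluster (Pm : S K → Measure (Obs D)) (f : S K → Obs D → ℝ) (C : Finset (S K)) : Prop :=
  C.Nonempty ∧ (∀ j ∈ C, 0 < Pm j (⋂ i ∈ C, G f i)) ∧ (∀ j ∉ C, Pm j (⋂ i ∈ C, G f i) = 0)

/-- The set `X_l = {x : max_{i ≠ l} p*_i f_i(x) < (1-ε) p*_l f_l(x)}`. -/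
def Xl (p : S K → S K → ℝ) (f : S K → Obs D → ℝ) (ε : ℝ) (l : S K) : Set (Obs D) :=
  {x | ∀ i : S K, i ≠ l → pstar p i * f i x < (1 - ε) * (pstar p l * f l x)}

/-- `mpp r i j` is the maximal probability of a path from `i` to `j` with `r`
intermediate states (so `q*_{ij} = mpp (m-1) i j`). -/
noncomputable def mpp (p : S K → S K → ℝ) : ℕ → S K → S K → ℝ
  | 0, i, j => p i j
  | (r + 1), i, j => smax fun c => mpp p r i c * p c j

/-- The substochastic matrix `Q = (p_{ij})_{i,j ∈ C}`. -/
def Qmat (p : S K → S K → ℝ) (C : Finset (S K)) : Matrix {i // i ∈ C} {i // i ∈ C} ℝ :=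
  Matrix.of fun i j => p i.1 j.1


/-- for a cluster `C` there are constants `K > δ > 0` and a set
`Ẑ ⊆ ∩_{i∈C} G_i` of positive `λ`-measure on which `δ < f_i < K` for all `i ∈ C`
and `f_j = 0` for all `j ∉ C`. -/
theorem cluster_gives_Z {K D : ℕ} (f : S K → Obs D → ℝ)
    (μ : Measure (Obs D)) (Pm : S K → Measure (Obs D))
    (hf0 : ∀ l y, 0 ≤ f l y) (hfm : ∀ l, Measurable (f l))
    (hPm : ∀ l, Pm l = μ.withDensity fun y => ENNReal.ofReal (f l y))
    (hprob : ∀ l, IsProbabilityMeasure (Pm l))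
    (C : Finset (S K)) (hC : IsCluster Pm f C) :
    ∃ Kb δb : ℝ, 0 < δb ∧ δb < Kb ∧
      ∃ Z : Set (Obs D), Z ⊆ (⋂ i ∈ C, G f i) ∧ 0 < μ Z ∧
        ∀ z ∈ Z, (∀ i ∈ C, δb < f i z ∧ f i z < Kb) ∧ (∀ j ∉ C, f j z = 0) := by
  classical
  obtain ⟨⟨j0, hj0⟩, hposC, hzero⟩ := hC
  set A : Set (Obs D) := ⋂ i ∈ C, G f i with hAdef
  have hAm : MeasurableSet A :=
    MeasurableSet.biInter (Set.to_countable _)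
      (fun i _ => measurableSet_lt measurable_const (hfm i))
  -- the bad set where some f_j, j ∉ C, is positive inside A
  set B : Set (Obs D) := ⋃ j ∈ {j : S K | j ∉ C}, (A ∩ {x | 0 < f j x}) with hBdef
  have hBnull : μ B = 0 := by
    refine (measure_biUnion_null_iff (Set.to_countable _)).2 ?_
    intro j hj
    have h0 : Pm j A = 0 := hzero j hj
    rw [hPm, withDensity_apply _ hAm] at h0
    have hmeas : Measurable fun x => ENNReal.ofReal (f j x) := (hfm j).ennreal_ofReal
    have hae : (fun x => ENNReal.ofReal (f j x)) =ᵐ[μ.restrict A] 0 :=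
      (lintegral_eq_zero_iff hmeas).1 h0
    have hsub : {x | 0 < f j x} ⊆ {x | (fun x => ENNReal.ofReal (f j x)) x ≠ 0} := by
      intro x hx
      simp only [Set.mem_setOf_eq, ne_eq, ENNReal.ofReal_eq_zero, not_le]
      exact hx
    have h1 : μ.restrict A {x | 0 < f j x} = 0 :=
      measure_mono_null hsub hae
    rw [Measure.restrict_apply (measurableSet_lt measurable_const (hfm j))] at h1
    rw [Set.inter_comm] at h1
    exact h1
  have hzeroAB : ∀ x ∈ A \ B, ∀ j ∉ C, f j x = 0 := by
    intro x hx j hj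
    by_contra h
    have hpos : 0 < f j x := lt_of_le_of_ne (hf0 j x) (Ne.symm h)
    exact hx.2 (Set.mem_biUnion hj ⟨hx.1, hpos⟩)
  -- slices
  set Zn : ℕ → Set (Obs D) := fun n =>
    (A \ B) ∩ {x | ∀ i ∈ C, (1 : ℝ) / (n + 1) < f i x ∧ f i x < n + 1} with hZdef
  have hZmono : Monotone Zn := by
    intro n m hnm
    refine Set.inter_subset_inter_right _ ?_
    intro x hx i hi
    obtain ⟨h1, h2⟩ := hx i hi
    have hnm' : (n : ℝ) + 1 ≤ (m : ℝ) + 1 := by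
      have := (Nat.cast_le (α := ℝ)).2 hnm; linarith
    constructor
    · calc (1 : ℝ) / (m + 1) ≤ 1 / (n + 1) :=
            one_div_le_one_div_of_le (by positivity) hnm'
        _ < f i x := h1
    · linarith
  have hUnion : (⋃ n, Zn n) = A \ B := by
    apply Set.Subset.antisymm
    · exact Set.iUnion_subset fun n => Set.inter_subset_left
    · intro x hx
      have hxA : x ∈ A := hx.1
      have hfp : ∀ i ∈ C, 0 < f i x := by
        intro i hi
        have := Set.mem_iInter₂.1 hxA
        exact this i hi
      set M : ℝ := C.sup' ⟨j0, hj0⟩ (fun i => max (f i x) (1 / f i x)) with hM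
      obtain ⟨n, hn⟩ := exists_nat_gt M
      refine Set.mem_iUnion.2 ⟨n, hx, ?_⟩
      intro i hi
      have hle : max (f i x) (1 / f i x) ≤ M := Finset.le_sup' (fun i => max (f i x) (1 / f i x)) hi
      have h1 : f i x < (n : ℝ) + 1 := by
        have := le_max_left (f i x) (1 / f i x)
        linarith
      have h2 : 1 / f i x < (n : ℝ) + 1 := by
        have := le_max_right (f i x) (1 / f i x)
        linarith
      refine ⟨?_, h1⟩
      have hfpos := hfp i hi
      rw [div_lt_iff₀ hfpos] at h2
      rw [div_lt_iff₀ (by positivity : (0:ℝ) < (n:ℝ) + 1)]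
      linarith [mul_comm ((n:ℝ)+1) (f i x)]
  -- positivity of Pm j0 on A \ B
  have hAC : Pm j0 ≪ μ := by
    rw [hPm]; exact withDensity_absolutelyContinuous _ _
  have hPmB : Pm j0 B = 0 := hAC hBnull
  have hPmAB : 0 < Pm j0 (A \ B) := by
    rw [measure_diff_null hPmB]
    exact hposC j0 hj0
  have hiSup : 0 < ⨆ n, Pm j0 (Zn n) := by
    rw [← hZmono.directed_le.measure_iUnion, hUnion]
    exact hPmAB
  obtain ⟨n, hn⟩ := lt_iSup_iff.1 hiSup
  have hμZn : 0 < μ (Zn n) := by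
    rcases eq_or_lt_of_le (zero_le (a := μ (Zn n))) with h | h
    · exact absurd (hAC h.symm) hn.ne'
    · exact h
  refine ⟨(n : ℝ) + 2, 1 / ((n : ℝ) + 1), by positivity, ?_, Zn n, ?_, hμZn, ?_⟩
  · have h1 : (1 : ℝ) / (n + 1) ≤ 1 := by
      rw [div_le_one (by positivity)]; linarith [Nat.cast_nonneg (α := ℝ) n]
    linarith [Nat.cast_nonneg (α := ℝ) n]
  · exact fun x hx => hx.1.1
  · intro z hz
    refine ⟨fun i hi => ?_, fun j hj => hzeroAB z hz.1 j hj⟩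
    obtain ⟨h1, h2⟩ := hz.2 i hi
    exact ⟨h1, by linarith⟩


end ViterbiHMM
end

section
/- Let s_0 = 1, s_1, …, s_{L−1}, s_L = 1 be a cycle of states in S with p_{s_{i−1} s_i} = p*_{s_i} for every i = 1,…,L, and fix ε ∈ (0,1). Suppose the observations satisfy x_{t+i} ∈ X_{s_i} for i = 1,…,L−1. Then p^{(L−1)}_{i1}(t) ≤ p^{(L−1)}_{11}(t) for every i ∈ S. -/
open Finset MeasureTheory

namespace ViterbiHMM

variable {K D : ℕ}

/-- claim (krim): along a maximal-transition cycle `s_0 = 1, …, s_L = 1`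
with observations in the corresponding sets `X_{s_i}`, `p^{(L-1)}_{i1}(t) ≤ p^{(L-1)}_{11}(t)`. -/
theorem plik_to_one_le {K D : ℕ} (p : S K → S K → ℝ) (f : S K → Obs D → ℝ) (x : ℕ → Obs D)
    (hp0 : ∀ i j, 0 ≤ p i j) (hf0 : ∀ l y, 0 ≤ f l y) (hpstar : ∀ l, 0 < pstar p l)
    (st1 : S K) (L : ℕ) (hL : 1 ≤ L) (s : ℕ → S K)
    (hs0 : s 0 = st1) (hsL : s L = st1)
    (hcyc : ∀ i ∈ Finset.Icc 1 L, p (s (i - 1)) (s i) = pstar p (s i))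
    (ε : ℝ) (hε : 0 < ε) (hε1 : ε < 1)
    (t : ℕ)
    (hobs : ∀ i ∈ Finset.Icc 1 (L - 1), x (t + i) ∈ Xl p f ε (s i)) :
    ∀ i : S K, plik p f x t (L - 1) i st1 ≤ plik p f x t (L - 1) st1 st1 := by

  -- auxiliary facts about smax
  have le_smax : ∀ (g : S K → ℝ) (i : S K), g i ≤ smax g :=
    fun g i => Finset.le_sup' g (Finset.mem_univ i)
  have smax_le : ∀ (g : S K → ℝ) (a : ℝ), (∀ i, g i ≤ a) → smax g ≤ a :=
    fun g a h => Finset.sup'_le _ _ (fun i _ => h i)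
  set B : ℕ → ℝ := fun r => ∏ k ∈ Finset.Icc 1 r, (pstar p (s k) * f (s k) (x (t + k)))
    with hB
  have hB0 : ∀ r, 0 ≤ B r := by
    intro r
    apply Finset.prod_nonneg
    intro k _
    exact mul_nonneg (hpstar _).le (hf0 _ _)
  have hBsucc : ∀ r, B (r + 1) = B r * (pstar p (s (r + 1)) * f (s (r + 1)) (x (t + r + 1))) := by
    intro r
    simp only [hB]
    rw [Finset.prod_Icc_succ_top (by omega : 1 ≤ r + 1)]
    rfl
  have claimA : ∀ r, r ≤ L - 1 → ∀ i c, plik p f x t r i c ≤ B r * pstar p c := by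
    intro r
    induction r with
    | zero =>
      intro _ i c
      have : B 0 = 1 := by simp [hB]
      rw [this, one_mul]
      exact le_smax (fun j => p j c) i
    | succ r ih =>
      intro hr i c
      have hr' : r ≤ L - 1 := by omega
      rw [plik]
      apply smax_le
      intro c'
      have h1 : plik p f x t r i c' ≤ B r * pstar p c' := ih hr' i c'
      have hX0 : 0 ≤ pstar p (s (r + 1)) * f (s (r + 1)) (x (t + r + 1)) :=
        mul_nonneg (hpstar _).le (hf0 _ _)
      have h2 : pstar p c' * f c' (x (t + r + 1)) ≤
          pstar p (s (r + 1)) * f (s (r + 1)) (x (t + r + 1)) := by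
        by_cases hc : c' = s (r + 1)
        · rw [hc]
        · have hm : r + 1 ∈ Finset.Icc 1 (L - 1) := Finset.mem_Icc.mpr ⟨by omega, hr⟩
          have hlt := hobs (r + 1) hm c' hc
          have : x (t + (r + 1)) = x (t + r + 1) := by ring_nf
          rw [this] at hlt
          nlinarith
      have h3 : p c' c ≤ pstar p c := le_smax (fun j => p j c) c'
      calc plik p f x t r i c' * f c' (x (t + r + 1)) * p c' c
          ≤ (B r * pstar p c') * f c' (x (t + r + 1)) * p c' c := by
            apply mul_le_mul_of_nonneg_right _ (hp0 _ _)
            exact mul_le_mul_of_nonneg_right h1 (hf0 _ _)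
        _ = B r * (pstar p c' * f c' (x (t + r + 1))) * p c' c := by ring
        _ ≤ B r * (pstar p (s (r + 1)) * f (s (r + 1)) (x (t + r + 1))) * p c' c := by
            apply mul_le_mul_of_nonneg_right _ (hp0 _ _)
            exact mul_le_mul_of_nonneg_left h2 (hB0 r)
        _ ≤ B r * (pstar p (s (r + 1)) * f (s (r + 1)) (x (t + r + 1))) * pstar p c := by
            exact mul_le_mul_of_nonneg_left h3 (mul_nonneg (hB0 r) hX0)
        _ = B (r + 1) * pstar p c := by rw [hBsucc r]
  have claimB : ∀ r, r + 1 ≤ L → B r * pstar p (s (r + 1)) ≤ plik p f x t r st1 (s (r + 1)) := by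
    intro r
    induction r with
    | zero =>
      intro _
      have hm : (1 : ℕ) ∈ Finset.Icc 1 L := Finset.mem_Icc.mpr ⟨le_refl 1, by omega⟩
      have := hcyc 1 hm
      simp only [Nat.sub_self] at this
      rw [hs0] at this
      have hB0' : B 0 = 1 := by simp [hB]
      rw [hB0', one_mul]
      rw [show plik p f x t 0 st1 (s 1) = p st1 (s 1) from rfl, this]
    | succ r ih =>
      intro hr
      have hr' : r + 1 ≤ L := by omega
      have IH := ih hr'
      have hm : r + 2 ∈ Finset.Icc 1 L := Finset.mem_Icc.mpr ⟨by omega, by omega⟩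
      have hc2 := hcyc (r + 2) hm
      have : r + 2 - 1 = r + 1 := rfl
      rw [this] at hc2
      rw [plik]
      refine le_trans ?_ (le_smax (fun c => plik p f x t r st1 c * f c (x (t + r + 1)) *
        p c (s (r + 2))) (s (r + 1)))
      rw [hc2, hBsucc r]
      have hstep : B r * pstar p (s (r + 1)) * f (s (r + 1)) (x (t + r + 1)) ≤
          plik p f x t r st1 (s (r + 1)) * f (s (r + 1)) (x (t + r + 1)) :=
        mul_le_mul_of_nonneg_right IH (hf0 _ _)
      calc B r * (pstar p (s (r + 1)) * f (s (r + 1)) (x (t + r + 1))) * pstar p (s (r + 2))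
          = (B r * pstar p (s (r + 1)) * f (s (r + 1)) (x (t + r + 1))) * pstar p (s (r + 2)) := by
            ring
        _ ≤ plik p f x t r st1 (s (r + 1)) * f (s (r + 1)) (x (t + r + 1)) *
            pstar p (s (r + 2)) := mul_le_mul_of_nonneg_right hstep (hpstar _).le
  intro i
  have hA := claimA (L - 1) (le_refl _) i st1
  have hBfin := claimB (L - 1) (by omega)
  rw [show L - 1 + 1 = L from by omega, hsL] at hBfin
  exact le_trans hA hBfin


end ViterbiHMM
end

section
/- Let s_0 = 1, s_1, …, s_{L−1}, s_L = 1 be a cycle of states in S with p_{s_{i−1} s_i} = p*_{s_i} for every i = 1,…,L, and fix ε ∈ (0,1). Suppose the observations satisfy x_{t+i} ∈ X_{s_i} for i = 1,…,L−1 and x_{t+L} ∈ X_1. Then for every i ∈ S and every j ∈ S with j ≠ 1: p^{(L−1)}_{ij}(t) f_j(x_{t+L}) < (1−ε) p^{(L−1)}_{11}(t) f_1(x_{t+L}), and in particular p^{(L−1)}_{11}(t) f_1(x_{t+L}) > 0. -/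
open Finset MeasureTheory

namespace ViterbiHMM

variable {K D : ℕ}

lemma le_smax' {K : ℕ} (g : S K → ℝ) (c : S K) : g c ≤ smax g :=
  Finset.le_sup' g (Finset.mem_univ c)

lemma smax_le' {K : ℕ} {g : S K → ℝ} {a : ℝ} (h : ∀ c, g c ≤ a) : smax g ≤ a :=
  Finset.sup'_le _ _ fun c _ => h c

lemma p_le_pstar' {K : ℕ} (p : S K → S K → ℝ) (i j : S K) : p i j ≤ pstar p j :=
  le_smax' (fun c => p c j) i

/-- Lower bound: any explicit path gives a lower bound on `plik`. -/
lemma path_le_plik {K D : ℕ} (p : S K → S K → ℝ) (f : S K → Obs D → ℝ) (x : ℕ → Obs D)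
    (hp0 : ∀ i j, 0 ≤ p i j) (hf0 : ∀ l y, 0 ≤ f l y) (u : ℕ) :
    ∀ (r : ℕ) (q : ℕ → S K) (j : S K),
      (∏ k ∈ Finset.Icc 1 r, (p (q (k - 1)) (q k) * f (q k) (x (u + k)))) * p (q r) j
        ≤ plik p f x u r (q 0) j := by
  intro r
  induction r with
  | zero => intro q j; simp [plik]
  | succ r ih =>
    intro q j
    have h1 : plik p f x u r (q 0) (q (r + 1)) * f (q (r + 1)) (x (u + r + 1)) * p (q (r + 1)) j
        ≤ plik p f x u (r + 1) (q 0) j :=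
      le_smax' (fun c => plik p f x u r (q 0) c * f c (x (u + r + 1)) * p c j) (q (r + 1))
    refine le_trans ?_ h1
    rw [Finset.prod_Icc_succ_top (by omega : 1 ≤ r + 1)]
    have hih := ih q (q (r + 1))
    have hstep :
        ((∏ k ∈ Finset.Icc 1 r, (p (q (k - 1)) (q k) * f (q k) (x (u + k)))) *
            p (q r) (q (r + 1))) * (f (q (r + 1)) (x (u + (r + 1))) * p (q (r + 1)) j)
          ≤ plik p f x u r (q 0) (q (r + 1)) *
              (f (q (r + 1)) (x (u + (r + 1))) * p (q (r + 1)) j) :=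
      mul_le_mul_of_nonneg_right hih (mul_nonneg (hf0 _ _) (hp0 _ _))
    have hx : u + (r + 1) = u + r + 1 := by omega
    rw [hx] at hstep
    calc (∏ k ∈ Finset.Icc 1 r, (p (q (k - 1)) (q k) * f (q k) (x (u + k)))) *
            (p (q (r + 1 - 1)) (q (r + 1)) * f (q (r + 1)) (x (u + (r + 1)))) *
            p (q (r + 1)) j
        = ((∏ k ∈ Finset.Icc 1 r, (p (q (k - 1)) (q k) * f (q k) (x (u + k)))) *
            p (q r) (q (r + 1))) * (f (q (r + 1)) (x (u + (r + 1))) * p (q (r + 1)) j) := by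
          have : r + 1 - 1 = r := by omega
          rw [this]; ring
      _ ≤ plik p f x u r (q 0) (q (r + 1)) *
            (f (q (r + 1)) (x (u + (r + 1))) * p (q (r + 1)) j) := by
          rw [show u + (r + 1) = u + r + 1 from by omega]; exact hstep
      _ = plik p f x u r (q 0) (q (r + 1)) * f (q (r + 1)) (x (u + r + 1)) * p (q (r + 1)) j := by
          rw [show u + (r + 1) = u + r + 1 from by omega]; ring

/-- Upper bound on `plik` by products of maximal one-step terms. -/
lemma plik_le_prod {K D : ℕ} (p : S K → S K → ℝ) (f : S K → Obs D → ℝ) (x : ℕ → Obs D)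
    (hp0 : ∀ i j, 0 ≤ p i j) (hf0 : ∀ l y, 0 ≤ f l y) (u : ℕ) :
    ∀ (r : ℕ) (i j : S K), plik p f x u r i j ≤
      (∏ k ∈ Finset.Icc 1 r, smax (fun c => pstar p c * f c (x (u + k)))) * pstar p j := by
  have hpstar0 : ∀ j : S K, 0 ≤ pstar p j := fun j => le_trans (hp0 j j) (p_le_pstar' p j j)
  have hB0 : ∀ k, 0 ≤ smax (fun c : S K => pstar p c * f c (x (u + k))) := fun k =>
    le_trans (mul_nonneg (hpstar0 (0 : S K)) (hf0 _ _))
      (le_smax' (fun c : S K => pstar p c * f c (x (u + k))) (0 : S K))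
  intro r
  induction r with
  | zero => intro i j; simpa [plik] using p_le_pstar' p i j
  | succ r ih =>
    intro i j
    rw [Finset.prod_Icc_succ_top (by omega : 1 ≤ r + 1)]
    refine smax_le' fun c => ?_
    have hPi0 : 0 ≤ ∏ k ∈ Finset.Icc 1 r, smax (fun c : S K => pstar p c * f c (x (u + k))) :=
      Finset.prod_nonneg fun k _ => hB0 k
    have h1 : plik p f x u r i c * f c (x (u + r + 1)) * p c j ≤
        ((∏ k ∈ Finset.Icc 1 r, smax (fun c : S K => pstar p c * f c (x (u + k)))) * pstar p c) *
          f c (x (u + r + 1)) * p c j := by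
      exact mul_le_mul_of_nonneg_right
        (mul_le_mul_of_nonneg_right (ih i c) (hf0 _ _)) (hp0 _ _)
    refine le_trans h1 ?_
    have h2 : pstar p c * f c (x (u + (r + 1))) ≤
        smax (fun c : S K => pstar p c * f c (x (u + (r + 1)))) :=
      le_smax' (fun c : S K => pstar p c * f c (x (u + (r + 1)))) c
    have hx : u + (r + 1) = u + r + 1 := by omega
    rw [hx] at h2
    calc ((∏ k ∈ Finset.Icc 1 r, smax (fun c : S K => pstar p c * f c (x (u + k)))) * pstar p c) *
          f c (x (u + r + 1)) * p c j
        = (∏ k ∈ Finset.Icc 1 r, smax (fun c : S K => pstar p c * f c (x (u + k)))) *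
            (pstar p c * f c (x (u + r + 1))) * p c j := by ring
      _ ≤ (∏ k ∈ Finset.Icc 1 r, smax (fun c : S K => pstar p c * f c (x (u + k)))) *
            smax (fun c : S K => pstar p c * f c (x (u + r + 1))) * p c j :=
          mul_le_mul_of_nonneg_right (mul_le_mul_of_nonneg_left h2 hPi0) (hp0 _ _)
      _ ≤ (∏ k ∈ Finset.Icc 1 r, smax (fun c : S K => pstar p c * f c (x (u + k)))) *
            smax (fun c : S K => pstar p c * f c (x (u + r + 1))) * pstar p j := by
          refine mul_le_mul_of_nonneg_left (p_le_pstar' p c j) ?_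
          have := hB0 (r + 1)
          rw [hx] at this
          exact mul_nonneg hPi0 this
      _ = _ := by rw [hx]

/-- claim (tsiv): along a maximal-transition cycle with matching
observations, ending with an observation in `X_1`, partial likelihoods into `j ≠ 1`
are beaten by a factor `1-ε`, and the `1 → 1` partial likelihood is positive. -/
theorem plik_strict_bound {K D : ℕ} (p : S K → S K → ℝ) (f : S K → Obs D → ℝ) (x : ℕ → Obs D)
    (hp0 : ∀ i j, 0 ≤ p i j) (hf0 : ∀ l y, 0 ≤ f l y) (hpstar : ∀ l, 0 < pstar p l)
    (st1 : S K) (L : ℕ) (hL : 1 ≤ L) (s : ℕ → S K)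
    (hs0 : s 0 = st1) (hsL : s L = st1)
    (hcyc : ∀ i ∈ Finset.Icc 1 L, p (s (i - 1)) (s i) = pstar p (s i))
    (ε : ℝ) (hε : 0 < ε) (hε1 : ε < 1)
    (t : ℕ)
    (hobs : ∀ i ∈ Finset.Icc 1 (L - 1), x (t + i) ∈ Xl p f ε (s i))
    (hend : x (t + L) ∈ Xl p f ε st1) :
    (∀ i j : S K, j ≠ st1 →
      plik p f x t (L - 1) i j * f j (x (t + L)) <
        (1 - ε) * (plik p f x t (L - 1) st1 st1 * f st1 (x (t + L)))) ∧
    0 < plik p f x t (L - 1) st1 st1 * f st1 (x (t + L)) := by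
  obtain ⟨r, rfl⟩ : ∃ r, L = r + 1 := ⟨L - 1, by omega⟩
  simp only [Nat.add_sub_cancel] at hobs ⊢
  have hε' : 0 < 1 - ε := by linarith
  -- positivity of the one-step maxima along the cycle
  have hM : ∀ k ∈ Finset.Icc 1 r, 0 < pstar p (s k) * f (s k) (x (t + k)) := by
    intro k hk
    obtain ⟨i, hi⟩ := exists_ne (s k)
    have h := hobs k hk i hi
    have h0 : 0 ≤ pstar p i * f i (x (t + k)) := mul_nonneg (hpstar i).le (hf0 _ _)
    nlinarith
  have hMPi : 0 < ∏ k ∈ Finset.Icc 1 r, pstar p (s k) * f (s k) (x (t + k)) :=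
    Finset.prod_pos hM
  -- the end observation
  have hendpos : 0 < pstar p st1 * f st1 (x (t + (r + 1))) := by
    obtain ⟨i, hi⟩ := exists_ne st1
    have h := hend i hi
    have h0 : 0 ≤ pstar p i * f i (x (t + (r + 1))) := mul_nonneg (hpstar i).le (hf0 _ _)
    nlinarith
  have hfend : 0 < f st1 (x (t + (r + 1))) := by
    rcases (hf0 st1 (x (t + (r + 1)))).lt_or_eq with h | h
    · exact h
    · rw [← h, mul_zero] at hendpos; exact absurd hendpos (lt_irrefl 0)
  -- maxima are attained on the cycle states
  have hB : ∀ k ∈ Finset.Icc 1 r,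
      smax (fun c : S K => pstar p c * f c (x (t + k))) ≤
        pstar p (s k) * f (s k) (x (t + k)) := by
    intro k hk
    refine smax_le' fun c => ?_
    by_cases hc : c = s k
    · rw [hc]
    · have h := hobs k hk c hc
      have := hM k hk
      nlinarith
  -- lower bound on plik st1 st1
  have hlow : (∏ k ∈ Finset.Icc 1 r, pstar p (s k) * f (s k) (x (t + k))) * pstar p st1 ≤
      plik p f x t r st1 st1 := by
    have hpath := path_le_plik p f x hp0 hf0 t r s st1
    rw [hs0] at hpath
    refine le_trans (le_of_eq ?_) hpath
    congr 1
    · refine Finset.prod_congr rfl fun k hk => ?_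
      have hk' : k ∈ Finset.Icc 1 (r + 1) := by
        simp only [Finset.mem_Icc] at hk ⊢; omega
      rw [hcyc k hk']
    · have hr1 : r + 1 ∈ Finset.Icc 1 (r + 1) := by simp
      have := hcyc (r + 1) hr1
      rw [Nat.add_sub_cancel, hsL] at this
      rw [this]
  have hplikpos : 0 < plik p f x t r st1 st1 * f st1 (x (t + (r + 1))) := by
    have : 0 < (∏ k ∈ Finset.Icc 1 r, pstar p (s k) * f (s k) (x (t + k))) * pstar p st1 :=
      mul_pos hMPi (hpstar st1)
    exact mul_pos (lt_of_lt_of_le this hlow) hfend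
  refine ⟨fun i j hj => ?_, hplikpos⟩
  -- upper bound chain
  have hup := plik_le_prod p f x hp0 hf0 t r i j
  have hBPi : (∏ k ∈ Finset.Icc 1 r, smax (fun c : S K => pstar p c * f c (x (t + k)))) ≤
      ∏ k ∈ Finset.Icc 1 r, pstar p (s k) * f (s k) (x (t + k)) := by
    refine Finset.prod_le_prod (fun k _ => ?_) hB
    exact le_trans (mul_nonneg (hpstar (0 : S K)).le (hf0 _ _))
      (le_smax' (fun c : S K => pstar p c * f c (x (t + k))) (0 : S K))
  have hpfj : 0 ≤ pstar p j * f j (x (t + (r + 1))) := mul_nonneg (hpstar j).le (hf0 _ _)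
  calc plik p f x t r i j * f j (x (t + (r + 1)))
      ≤ ((∏ k ∈ Finset.Icc 1 r, smax (fun c : S K => pstar p c * f c (x (t + k)))) * pstar p j) *
          f j (x (t + (r + 1))) := mul_le_mul_of_nonneg_right hup (hf0 _ _)
    _ = (∏ k ∈ Finset.Icc 1 r, smax (fun c : S K => pstar p c * f c (x (t + k)))) *
          (pstar p j * f j (x (t + (r + 1)))) := by ring
    _ ≤ (∏ k ∈ Finset.Icc 1 r, pstar p (s k) * f (s k) (x (t + k))) *
          (pstar p j * f j (x (t + (r + 1)))) := mul_le_mul_of_nonneg_right hBPi hpfj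
    _ < (∏ k ∈ Finset.Icc 1 r, pstar p (s k) * f (s k) (x (t + k))) *
          ((1 - ε) * (pstar p st1 * f st1 (x (t + (r + 1))))) :=
        mul_lt_mul_of_pos_left (hend j hj) hMPi
    _ = (1 - ε) * (((∏ k ∈ Finset.Icc 1 r, pstar p (s k) * f (s k) (x (t + k))) * pstar p st1) *
          f st1 (x (t + (r + 1)))) := by ring
    _ ≤ (1 - ε) * (plik p f x t r st1 st1 * f st1 (x (t + (r + 1)))) := by
        refine mul_le_mul_of_nonneg_left ?_ hε'.le
        exact mul_le_mul_of_nonneg_right hlow hfend.le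

end ViterbiHMM
end

section
/- Let b_0, b_1, …, b_R be states with b_R = 1 and p_{b_{r−1} b_r} > 0 for every r = 1,…,R, fix ε ∈ (0,1), and let A = max_{i∈S} max_{j∈S : p_{ji}>0} p*_i / p_{ji}. Suppose the observations satisfy x_{t+r} ∈ X_{b_r} for r = 1,…,R−1 and x_{t+R} ∈ X_1. Then for all i, j ∈ S: p^{(R−1)}_{ij}(t) f_j(x_{t+R}) ≤ A^R p^{(R−1)}_{b_0 1}(t) f_1(x_{t+R}). -/
open Finset MeasureTheory

namespace ViterbiHMM

variable {K D : ℕ}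

lemma plik_nonneg' {K D : ℕ} (p : S K → S K → ℝ) (f : S K → Obs D → ℝ) (x : ℕ → Obs D)
    (hp0 : ∀ i j, 0 ≤ p i j) (hf0 : ∀ l y, 0 ≤ f l y) :
    ∀ r u i j, 0 ≤ plik p f x u r i j := by
  intro r
  induction r with
  | zero => intro u i j; exact hp0 i j
  | succ r ih =>
    intro u i j
    have h : (0:ℝ) ≤ plik p f x u r i i * f i (x (u + r + 1)) * p i j :=
      mul_nonneg (mul_nonneg (ih u i i) (hf0 _ _)) (hp0 _ _)
    calc (0:ℝ) ≤ plik p f x u r i i * f i (x (u + r + 1)) * p i j := h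
      _ ≤ smax fun c => plik p f x u r i c * f c (x (u + r + 1)) * p c j :=
        le_smax' (fun c => plik p f x u r i c * f c (x (u + r + 1)) * p c j) i
      _ = plik p f x u (r + 1) i j := rfl

/-- claim (sugar): along a positive-probability path `b_0, …, b_R = 1`
with matching observations, `p^{(R-1)}_{ij}(t) f_j(x_{t+R}) ≤ A^R p^{(R-1)}_{b₀1}(t) f_1(x_{t+R})`. -/
theorem plik_A_bound {K D : ℕ} (p : S K → S K → ℝ) (f : S K → Obs D → ℝ) (x : ℕ → Obs D)
    (hp0 : ∀ i j, 0 ≤ p i j) (hf0 : ∀ l y, 0 ≤ f l y) (hpstar : ∀ l, 0 < pstar p l)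
    (st1 : S K) (R : ℕ) (hR : 1 ≤ R) (b : ℕ → S K) (hbR : b R = st1)
    (hb : ∀ r ∈ Finset.Icc 1 R, 0 < p (b (r - 1)) (b r))
    (ε : ℝ) (hε : 0 < ε) (hε1 : ε < 1)
    -- `A = max_{i} max_{j : p_{ji} > 0} p*_i / p_{ji}`
    (A : ℝ) (hA1 : ∀ i j : S K, 0 < p j i → pstar p i / p j i ≤ A)
    (hA2 : ∃ i j : S K, 0 < p j i ∧ A = pstar p i / p j i)
    (t : ℕ)
    (hobs : ∀ r ∈ Finset.Icc 1 (R - 1), x (t + r) ∈ Xl p f ε (b r))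
    (hend : x (t + R) ∈ Xl p f ε st1) :
    ∀ i j : S K, plik p f x t (R - 1) i j * f j (x (t + R)) ≤
      A ^ R * (plik p f x t (R - 1) (b 0) st1 * f st1 (x (t + R))) := by
  have hA0 : 0 ≤ A := by
    obtain ⟨i, j, hpji, hAe⟩ := hA2
    rw [hAe]
    exact div_nonneg (hpstar i).le hpji.le
  have hplik0 := plik_nonneg' p f x hp0 hf0
  have hX : ∀ r, 1 ≤ r → r ≤ R → x (t + r) ∈ Xl p f ε (b r) := by
    intro r h1 h2
    rcases eq_or_lt_of_le h2 with h | h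
    · rw [h, hbR]; exact hend
    · exact hobs r (Finset.mem_Icc.mpr ⟨h1, by omega⟩)
  have hXle : ∀ r, 1 ≤ r → r ≤ R → ∀ c,
      pstar p c * f c (x (t + r)) ≤ pstar p (b r) * f (b r) (x (t + r)) := by
    intro r h1 h2 c
    by_cases hc : c = b r
    · rw [hc]
    · have h := hX r h1 h2 c hc
      have h1' : (0:ℝ) ≤ pstar p (b r) * f (b r) (x (t + r)) :=
        mul_nonneg (hpstar _).le (hf0 _ _)
      nlinarith
  have hAp : ∀ r, 1 ≤ r → r ≤ R → pstar p (b r) ≤ A * p (b (r - 1)) (b r) := by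
    intro r h1 h2
    have hb' := hb r (Finset.mem_Icc.mpr ⟨h1, h2⟩)
    have h := hA1 (b r) (b (r - 1)) hb'
    rwa [div_le_iff₀ hb'] at h
  have key : ∀ s, s + 1 ≤ R → ∀ i j,
      plik p f x t s i j * f j (x (t + s + 1)) ≤
        A ^ (s + 1) * (plik p f x t s (b 0) (b (s + 1)) * f (b (s + 1)) (x (t + s + 1))) := by
    intro s
    induction s with
    | zero =>
      intro h1 i j
      have h2 : p i j * f j (x (t + 1)) ≤ pstar p j * f j (x (t + 1)) :=
        mul_le_mul_of_nonneg_right (le_smax' (fun c => p c j) i) (hf0 _ _)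
      have h3 := hXle 1 le_rfl h1 j
      have h4 := hAp 1 le_rfl h1
      calc p i j * f j (x (t + 1)) ≤ pstar p j * f j (x (t + 1)) := h2
        _ ≤ pstar p (b 1) * f (b 1) (x (t + 1)) := h3
        _ ≤ (A * p (b 0) (b 1)) * f (b 1) (x (t + 1)) :=
          mul_le_mul_of_nonneg_right h4 (hf0 _ _)
        _ = A ^ 1 * (p (b 0) (b 1) * f (b 1) (x (t + 1))) := by ring
    | succ s ih =>
      intro h1 i j
      have hsR : s + 1 ≤ R := by omega
      obtain ⟨c0, -, hc0⟩ := Finset.exists_mem_eq_sup' (Finset.univ_nonempty)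
        (fun c => plik p f x t s i c * f c (x (t + s + 1)) * p c j)
      have hL : plik p f x t (s + 1) i j =
          plik p f x t s i c0 * f c0 (x (t + s + 1)) * p c0 j := hc0
      -- bound the prefix using the induction hypothesis
      have hpre := ih hsR i c0
      -- bound the last transition/emission
      have h2 : p c0 j * f j (x (t + s + 2)) ≤ pstar p j * f j (x (t + s + 2)) :=
        mul_le_mul_of_nonneg_right (le_smax' (fun c => p c j) c0) (hf0 _ _)
      have h3 := hXle (s + 2) (by omega) (by omega) j
      have h4 := hAp (s + 2) (by omega) (by omega)
      have h5 : p c0 j * f j (x (t + s + 2)) ≤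
          (A * p (b (s + 1)) (b (s + 2))) * f (b (s + 2)) (x (t + s + 2)) := by
        refine h2.trans ?_
        have hx2 : t + (s + 2) = t + s + 2 := by omega
        rw [hx2] at h3
        exact h3.trans (mul_le_mul_of_nonneg_right h4 (hf0 _ _))
      have hnn1 : (0:ℝ) ≤ plik p f x t s i c0 * f c0 (x (t + s + 1)) :=
        mul_nonneg (hplik0 _ _ _ _) (hf0 _ _)
      have hnn2 : (0:ℝ) ≤ (A * p (b (s + 1)) (b (s + 2))) * f (b (s + 2)) (x (t + s + 2)) :=
        mul_nonneg (mul_nonneg hA0 (hp0 _ _)) (hf0 _ _)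
      have hnn3 : (0:ℝ) ≤ A ^ (s + 1) *
          (plik p f x t s (b 0) (b (s + 1)) * f (b (s + 1)) (x (t + s + 1))) :=
        mul_nonneg (pow_nonneg hA0 _) (mul_nonneg (hplik0 _ _ _ _) (hf0 _ _))
      have hmul : (plik p f x t s i c0 * f c0 (x (t + s + 1))) * (p c0 j * f j (x (t + s + 2))) ≤
          (A ^ (s + 1) * (plik p f x t s (b 0) (b (s + 1)) * f (b (s + 1)) (x (t + s + 1)))) *
          ((A * p (b (s + 1)) (b (s + 2))) * f (b (s + 2)) (x (t + s + 2))) :=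
        mul_le_mul hpre h5 (mul_nonneg (hp0 _ _) (hf0 _ _)) hnn3
      have hpath : plik p f x t s (b 0) (b (s + 1)) * f (b (s + 1)) (x (t + s + 1)) *
          p (b (s + 1)) (b (s + 2)) ≤ plik p f x t (s + 1) (b 0) (b (s + 2)) :=
        le_smax' (fun c => plik p f x t s (b 0) c * f c (x (t + s + 1)) * p c (b (s + 2))) (b (s + 1))
      calc plik p f x t (s + 1) i j * f j (x (t + s + 1 + 1))
          = (plik p f x t s i c0 * f c0 (x (t + s + 1))) * (p c0 j * f j (x (t + s + 2))) := by
            rw [hL]; ring_nf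
        _ ≤ (A ^ (s + 1) * (plik p f x t s (b 0) (b (s + 1)) * f (b (s + 1)) (x (t + s + 1)))) *
            ((A * p (b (s + 1)) (b (s + 2))) * f (b (s + 2)) (x (t + s + 2))) := hmul
        _ = A ^ (s + 2) * ((plik p f x t s (b 0) (b (s + 1)) * f (b (s + 1)) (x (t + s + 1)) *
            p (b (s + 1)) (b (s + 2))) * f (b (s + 2)) (x (t + s + 2))) := by ring
        _ ≤ A ^ (s + 2) * (plik p f x t (s + 1) (b 0) (b (s + 2)) * f (b (s + 2)) (x (t + s + 2))) := by
            refine mul_le_mul_of_nonneg_left ?_ (pow_nonneg hA0 _)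
            exact mul_le_mul_of_nonneg_right hpath (hf0 _ _)
        _ = A ^ (s + 1 + 1) * (plik p f x t (s + 1) (b 0) (b (s + 1 + 1)) *
            f (b (s + 1 + 1)) (x (t + s + 1 + 1))) := rfl
  intro i j
  have hR' : R - 1 + 1 = R := Nat.succ_pred_eq_of_pos hR
  have h := key (R - 1) (by omega) i j
  have hx : t + (R - 1) + 1 = t + R := by omega
  rw [hR', hx, hbR] at h
  exact h

end ViterbiHMM
end
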